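/- Let H be a bialgebra over a field k, (d,φ) a twisted derivation of H, and a ∈ H with ε(a) = 0. Then [(d,φ), ∂(a)] = ∂(d(a)), where ∂(a) = ([a,−], a⊗1 + 1⊗a − Δ(a)) and the bracket of pairs is [(d,φ),(d',φ')] = ([d,d'], (d⊗I + I⊗d)(φ') − (d'⊗I + I⊗d')(φ) − [φ,φ']). (This is the equivariance axiom making ∂ : ker ε → Der_tw(H) a crossed module of Lie algebras.) -/

import Mathlib

open scoped TensorProduct

noncomputable section

variable (K H : Type*) [Field K] [Ring H] [Bialgebra K H]

/-- The comultiplication of the bialgebra `H`. -/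
def cm : H →ₗ[K] H ⊗[K] H := Coalgebra.comul

/-- The counit of the bialgebra `H`. -/
def cu : H →ₗ[K] K := Coalgebra.counit

/-- A twisted derivation of the bialgebra `H` is a pair `(d, φ)` where `d` is a
`K`-algebra derivation of `H` and `φ ∈ H ⊗ H`, such that
`(d⊗I + I⊗d)(Δ(x)) − Δ(d(x)) = [φ, Δ(x)]` for all `x`,
`1⊗φ + (I⊗Δ)(φ) = φ⊗1 + (Δ⊗I)(φ)` (co-Hochschild 2-cocycle condition), and
`ε∘d = 0`, `(ε⊗I)(φ) = 0 = (I⊗ε)(φ)`. -/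
structure IsTwistedDerivation (d : H →ₗ[K] H) (φ : H ⊗[K] H) : Prop where
  leibniz : ∀ x y : H, d (x * y) = d x * y + x * d y
  conj : ∀ x : H,
    (LinearMap.rTensor H d + LinearMap.lTensor H d) (cm K H x) - cm K H (d x)
      = φ * cm K H x - cm K H x * φ
  cocycle : (1 : H) ⊗ₜ[K] φ + LinearMap.lTensor H (cm K H) φ
      = TensorProduct.assoc K H H H (φ ⊗ₜ[K] (1 : H) + LinearMap.rTensor H (cm K H) φ)
  counit_comp : ∀ x : H, cu K H (d x) = 0
  counit_left : TensorProduct.lid K H (LinearMap.rTensor H (cu K H) φ) = 0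
  counit_right : TensorProduct.rid K H (LinearMap.lTensor H (cu K H) φ) = 0

/-- The inner derivation `[a, −] : x ↦ ax − xa`. -/
def innerDer (a : H) : H →ₗ[K] H := LinearMap.mulLeft K a - LinearMap.mulRight K a

/-- The coboundary twist `a⊗1 + 1⊗a − Δ(a)`. -/
def bdryTwist (a : H) : H ⊗[K] H := a ⊗ₜ[K] (1 : H) + (1 : H) ⊗ₜ[K] a - cm K H a


/-- The bracket `[(d,φ),(d',φ')] = ([d,d'], (d⊗I + I⊗d)(φ') − (d'⊗I + I⊗d')(φ) − [φ,φ'])`. -/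
def twBracket (p q : (H →ₗ[K] H) × (H ⊗[K] H)) : (H →ₗ[K] H) × (H ⊗[K] H) :=
  (p.1 ∘ₗ q.1 - q.1 ∘ₗ p.1,
    (LinearMap.rTensor H p.1 + LinearMap.lTensor H p.1) q.2
      - (LinearMap.rTensor H q.1 + LinearMap.lTensor H q.1) p.2
      - (p.2 * q.2 - q.2 * p.2))

/-- The inner twisted derivation `∂(a) = ([a,−], a⊗1 + 1⊗a − Δ(a))`, as a pair. -/
def bdryPair (a : H) : (H →ₗ[K] H) × (H ⊗[K] H) := (innerDer K H a, bdryTwist K H a)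

/-!
Both components are direct computations. On derivations, `[d, [a,-]] = [d a, -]`. On twists,
`d ⊗ I + I ⊗ d` sends `Δ a` to `Δ (d a) + [φ, Δ a]` by the defining property of `(d, φ)`,
while `[a,-] ⊗ I + I ⊗ [a,-]` is the commutator with `a ⊗ 1 + 1 ⊗ a`; the commutator terms
with `φ` then cancel against `[φ, ∂ a]`.
-/

section TensorMul

variable {R A B : Type*} [CommSemiring R] [Semiring A] [Semiring B] [Algebra R A] [Algebra R B]

theorem LinearMap.rTensor_mulLeft (a : A) :
    (mulLeft R a).rTensor B = mulLeft R (a ⊗ₜ[R] (1 : B)) := by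
  rw [mulLeft_tmul, mulLeft_one]; rfl

theorem LinearMap.rTensor_mulRight (a : A) :
    (mulRight R a).rTensor B = mulRight R (a ⊗ₜ[R] (1 : B)) := by
  rw [mulRight_tmul, mulRight_one]; rfl

theorem LinearMap.lTensor_mulLeft (b : B) :
    (mulLeft R b).lTensor A = mulLeft R ((1 : A) ⊗ₜ[R] b) := by
  rw [mulLeft_tmul, mulLeft_one]; rfl

theorem LinearMap.lTensor_mulRight (b : B) :
    (mulRight R b).lTensor A = mulRight R ((1 : A) ⊗ₜ[R] b) := by
  rw [mulRight_tmul, mulRight_one]; rfl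

end TensorMul

theorem rTensor_add_lTensor_innerDer (a : H) (ψ : H ⊗[K] H) :
    (LinearMap.rTensor H (innerDer K H a) + LinearMap.lTensor H (innerDer K H a)) ψ
      = (a ⊗ₜ[K] (1 : H) + (1 : H) ⊗ₜ[K] a) * ψ - ψ * (a ⊗ₜ[K] (1 : H) + (1 : H) ⊗ₜ[K] a) := by
  simp only [innerDer, LinearMap.rTensor_sub, LinearMap.lTensor_sub, LinearMap.rTensor_mulLeft,
    LinearMap.rTensor_mulRight, LinearMap.lTensor_mulLeft, LinearMap.lTensor_mulRight,
    LinearMap.add_apply, LinearMap.sub_apply, LinearMap.mulLeft_apply, LinearMap.mulRight_apply]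
  noncomm_ring

section Leibniz

variable {R A : Type*} [CommSemiring R] [Ring A] [Algebra R A] {d : A →ₗ[R] A}

theorem LinearMap.map_one_eq_zero_of_leibniz (hd : ∀ x y, d (x * y) = d x * y + x * d y) :
    d 1 = 0 := by
  simpa using hd 1 1

theorem LinearMap.comp_sub_comp_mulLeft_sub_mulRight (hd : ∀ x y, d (x * y) = d x * y + x * d y)
    (a : A) :
    d ∘ₗ (mulLeft R a - mulRight R a) - (mulLeft R a - mulRight R a) ∘ₗ d
      = mulLeft R (d a) - mulRight R (d a) := by
  ext x
  simp only [sub_apply, comp_apply, mulLeft_apply, mulRight_apply, map_sub, hd a x, hd x a]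
  noncomm_ring

end Leibniz

namespace IsTwistedDerivation

variable {K H} {d : H →ₗ[K] H} {φ : H ⊗[K] H}

theorem rTensor_add_lTensor_bdryTwist (h : IsTwistedDerivation K H d φ) (a : H) :
    (LinearMap.rTensor H d + LinearMap.lTensor H d) (bdryTwist K H a)
      = bdryTwist K H (d a) - (φ * cm K H a - cm K H a * φ) := by
  rw [← h.conj a, bdryTwist, bdryTwist, map_sub, map_add]
  simp only [LinearMap.add_apply, LinearMap.rTensor_tmul, LinearMap.lTensor_tmul,
    LinearMap.map_one_eq_zero_of_leibniz h.leibniz, TensorProduct.zero_tmul,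
    TensorProduct.tmul_zero]
  abel

end IsTwistedDerivation

theorem twBracket_bdryPair (d : H →ₗ[K] H) (φ : H ⊗[K] H)
    (h : IsTwistedDerivation K H d φ) (a : H) :
    twBracket K H (d, φ) (bdryPair K H a) = bdryPair K H (d a) := by
  refine Prod.ext (LinearMap.comp_sub_comp_mulLeft_sub_mulRight h.leibniz a) ?_
  change (LinearMap.rTensor H d + LinearMap.lTensor H d) (bdryTwist K H a)
      - (LinearMap.rTensor H (innerDer K H a) + LinearMap.lTensor H (innerDer K H a)) φ
      - (φ * bdryTwist K H a - bdryTwist K H a * φ) = bdryTwist K H (d a)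
  rw [h.rTensor_add_lTensor_bdryTwist, rTensor_add_lTensor_innerDer]
  unfold bdryTwist
  noncomm_ring

end
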